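/- The function $h(t) = \frac{1}{2\sin(t/2)} - \frac{1}{t}$, extended by $h(0) = 0$, is continuously differentiable on $[0, \pi]$ and satisfies $|h'(t)| \le 1/\pi$ for all $t \in (0,\pi)$ and $h(\pi) = \frac{1}{2} - \frac{1}{\pi} \le \frac{1}{2}$. -/

import Mathlib

/-!
Since `2 sin (t/2) = t · sinc (t/2)`, away from the zeros of `sinc (t/2)` we have
`h t = -τ t / sinc (t/2)`, where `τ = dslope (fun t => sinc (t/2)) 0` is the divided difference
of an analytic function and hence analytic. This also holds at `t = 0`, because `τ 0` is the
derivative at `0` of an even function. So `h` is analytic on a neighbourhood of `[0, π]`.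
With `x = t/2`, the derivative bound is `|sin² x - x² cos x| ≤ (4/π) x² sin² x`, which follows
from `x cos x ≤ sin x ≤ x`, Jordan's inequality `2x/π ≤ sin x` and `1 - x²/2 ≤ cos x`.
-/

noncomputable def hfun (t : ℝ) : ℝ :=
  if t = 0 then 0 else 1 / (2 * Real.sin (t / 2)) - 1 / t

open Real Set Filter
open scoped Topology

section DSlope

variable {𝕜 E : Type*} [NontriviallyNormedField 𝕜] [NormedAddCommGroup E] [NormedSpace 𝕜 E]
  {f : 𝕜 → E} {a b : 𝕜} {s : Set 𝕜}

theorem AnalyticAt.dslope_same (hf : AnalyticAt 𝕜 f a) : AnalyticAt 𝕜 (dslope f a) a :=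
  let ⟨_, hp⟩ := hf
  ⟨_, hp.has_fpower_series_dslope_fslope⟩

theorem AnalyticAt.dslope_of_ne (hf : AnalyticAt 𝕜 f b) (h : b ≠ a) :
    AnalyticAt 𝕜 (dslope f a) b := by
  have hslope : AnalyticAt 𝕜 (fun x => (x - a)⁻¹ • (f x - f a)) b :=
    ((analyticAt_id.sub analyticAt_const).inv (sub_ne_zero.2 h)).smul (hf.sub analyticAt_const)
  exact hslope.congr (dslope_eventuallyEq_slope_of_ne f h).symm

theorem AnalyticOnNhd.dslope (hf : AnalyticOnNhd 𝕜 f s) (ha : a ∈ s) :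
    AnalyticOnNhd 𝕜 (dslope f a) s := by
  intro b hb
  obtain rfl | h := eq_or_ne b a
  · exact (hf b hb).dslope_same
  · exact (hf b hb).dslope_of_ne h

end DSlope

theorem deriv_zero_of_even {E : Type*} [NormedAddCommGroup E] [NormedSpace ℝ E] {f : ℝ → E}
    (hf : ∀ x, f (-x) = f x) : deriv f 0 = 0 := by
  have h := deriv_comp_neg f 0
  simp only [hf, neg_zero] at h
  have h2 : (2 : ℝ) • deriv f 0 = 0 := by rw [two_smul]; nth_rewrite 1 [h]; exact neg_add_cancel _
  exact (smul_eq_zero.1 h2).resolve_left two_ne_zero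

namespace Real

theorem analyticOnNhd_sinc : AnalyticOnNhd ℝ sinc univ :=
  sinc_eq_dslope ▸ analyticOnNhd_sin.dslope (mem_univ 0)

theorem sinc_pos_of_mem_Ico {x : ℝ} (hx : x ∈ Ico 0 π) : 0 < sinc x := by
  obtain rfl | hx0 := eq_or_lt_of_le hx.1
  · simp [sinc_zero]
  · rw [sinc_of_ne_zero hx0.ne']
    exact div_pos (sin_pos_of_pos_of_lt_pi hx0 hx.2) hx0

theorem mul_sinc (x : ℝ) : x * sinc x = sin x := by
  simpa [sinc_eq_dslope] using sub_smul_dslope sin 0 x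

theorem abs_sin_sq_sub_sq_mul_cos_le {x : ℝ} (hx₀ : 0 < x) (hx : x < π / 2) :
    |sin x ^ 2 - x ^ 2 * cos x| ≤ 4 / π * (x ^ 2 * sin x ^ 2) := by
  have hsin_le : sin x ≤ x := sin_le hx₀.le
  have hsin_pos : 0 < sin x := sin_pos_of_pos_of_lt_pi hx₀ (by linarith [pi_pos])
  have hcos_pos : 0 < cos x := cos_pos_of_mem_Ioo ⟨by linarith, hx⟩
  have hcos_ge : 1 - x ^ 2 / 2 ≤ cos x := one_sub_sq_div_two_le_cos
  have hjordan : 2 / π * x ≤ sin x := mul_le_sin hx₀.le hx.le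
  have htan : x * cos x ≤ sin x := by
    have h := le_tan hx₀.le hx
    rwa [tan_eq_sin_div_cos, le_div_iff₀ hcos_pos] at h
  have hpi : 0 < π := pi_pos
  have hpi_cube : π ^ 3 ≤ 32 := by
    have := pow_le_pow_left₀ hpi.le pi_lt_d2.le 3
    norm_num at this
    linarith
  have hcoef : 1 / 2 ≤ 4 / π := by rw [div_le_div_iff₀ two_pos hpi]; linarith [pi_le_four]
  rw [abs_le]
  constructor
  · -- `x² cos x - sin² x ≤ x² cos x (1 - cos x) ≤ x⁴ / 2 ≤ 16 x⁴ / π³ ≤ 4 x² sin² x / π`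
    have hquart : x ^ 4 / 2 ≤ 4 / π * (x ^ 2 * (2 / π * x) ^ 2) := by
      have h16 : 1 / 2 ≤ 16 / π ^ 3 := by
        rw [div_le_div_iff₀ two_pos (by positivity)]
        linarith
      calc x ^ 4 / 2 = 1 / 2 * x ^ 4 := by ring
        _ ≤ 16 / π ^ 3 * x ^ 4 := by gcongr
        _ = 4 / π * (x ^ 2 * (2 / π * x) ^ 2) := by field_simp; ring
    have hsq : (2 / π * x) ^ 2 ≤ sin x ^ 2 := pow_le_pow_left₀ (by positivity) hjordan 2
    nlinarith [mul_le_mul_of_nonneg_left hsq (by positivity : 0 ≤ 4 / π * x ^ 2),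
      pow_le_pow_left₀ (by positivity) htan 2]
  · -- `sin² x - x² cos x ≤ sin² x (1 - cos x) ≤ x² sin² x / 2`
    nlinarith [mul_le_mul_of_nonneg_left hcoef (by positivity : 0 ≤ x ^ 2 * sin x ^ 2),
      mul_le_mul_of_nonneg_right (pow_le_pow_left₀ hsin_pos.le hsin_le 2) hcos_pos.le]

end Real

theorem analyticOnNhd_sinc_half : AnalyticOnNhd ℝ (fun t => sinc (t / 2)) univ :=
  fun _ _ => AnalyticAt.comp (g := sinc) (f := fun u => u / 2) (analyticOnNhd_sinc _ (mem_univ _))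
    analyticAt_id.div_const

theorem hfun_eq_neg_dslope_div {t : ℝ} (ht : sinc (t / 2) ≠ 0) :
    hfun t = -dslope (fun u => sinc (u / 2)) 0 t / sinc (t / 2) := by
  obtain rfl | ht₀ := eq_or_ne t 0
  · have heven : ∀ u : ℝ, sinc (-u / 2) = sinc (u / 2) := fun u => by rw [neg_div, sinc_neg]
    simp [hfun, dslope_same, deriv_zero_of_even (f := fun u => sinc (u / 2)) heven]
  · have hsin : t * sinc (t / 2) = 2 * sin (t / 2) := by linear_combination 2 * mul_sinc (t / 2)
    have hdslope := sub_smul_dslope (fun u => sinc (u / 2)) 0 t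
    simp only [zero_div, sinc_zero, sub_zero, smul_eq_mul] at hdslope
    rw [hfun, if_neg ht₀, ← hsin]
    field_simp
    linear_combination hdslope

theorem analyticAt_hfun {t : ℝ} (ht : sinc (t / 2) ≠ 0) : AnalyticAt ℝ hfun t := by
  have hsinc := analyticOnNhd_sinc_half t (mem_univ t)
  have hq : AnalyticAt ℝ (fun u => -dslope (fun u => sinc (u / 2)) 0 u / sinc (u / 2)) t :=
    ((analyticOnNhd_sinc_half.dslope (mem_univ 0)) t (mem_univ t)).neg.div hsinc ht
  refine hq.congr ?_
  filter_upwards [hsinc.continuousAt.eventually_ne ht] with u hu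
  exact (hfun_eq_neg_dslope_div hu).symm

theorem contDiffOn_hfun : ContDiffOn ℝ 1 hfun (Icc 0 π) := fun t ht =>
  have hsinc := sinc_pos_of_mem_Ico ⟨by linarith [ht.1], by linarith [ht.2, pi_pos]⟩
  (analyticAt_hfun hsinc.ne').contDiffAt.contDiffWithinAt

theorem hasDerivAt_hfun {t : ℝ} (ht₀ : t ≠ 0) (hsin : sin (t / 2) ≠ 0) :
    HasDerivAt hfun (1 / t ^ 2 - cos (t / 2) / (2 * sin (t / 2)) ^ 2) t := by
  have hS : HasDerivAt (fun u => 2 * sin (u / 2)) (cos (t / 2)) t :=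
    (((hasDerivAt_id' t).div_const 2).sin.const_mul 2).congr_deriv (by ring)
  have h := (hS.inv (mul_ne_zero two_ne_zero hsin)).sub (hasDerivAt_inv ht₀)
  refine (h.congr_of_eventuallyEq ?_).congr_deriv (by ring)
  filter_upwards [eventually_ne_nhds ht₀] with u hu
  simp [hfun, hu]

theorem abs_deriv_hfun_le {t : ℝ} (ht : t ∈ Ioo 0 π) : |deriv hfun t| ≤ 1 / π := by
  set x := t / 2 with hx
  have hx₀ : 0 < x := by linarith [ht.1]
  have hxπ : x < π / 2 := by linarith [ht.2]
  have hsin : 0 < sin x := sin_pos_of_pos_of_lt_pi hx₀ (by linarith [pi_pos])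
  have hderiv : deriv hfun t = (sin x ^ 2 - x ^ 2 * cos x) / (4 * (x ^ 2 * sin x ^ 2)) := by
    rw [(hasDerivAt_hfun ht.1.ne' hsin.ne').deriv, ← hx, show t = 2 * x by linarith]
    field_simp
    ring
  have hden : 0 < 4 * (x ^ 2 * sin x ^ 2) := by positivity
  rw [hderiv, abs_div, abs_of_pos hden, div_le_iff₀ hden]
  calc |sin x ^ 2 - x ^ 2 * cos x| ≤ 4 / π * (x ^ 2 * sin x ^ 2) :=
        abs_sin_sq_sub_sq_mul_cos_le hx₀ hxπ
    _ = 1 / π * (4 * (x ^ 2 * sin x ^ 2)) := by ring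

theorem hfun_pi : hfun π = 1 / 2 - 1 / π := by
  simp [hfun, pi_ne_zero]

theorem hfun_regularity :
    ContDiffOn ℝ 1 hfun (Set.Icc 0 Real.pi) ∧
    (∀ t ∈ Set.Ioo (0:ℝ) Real.pi, |deriv hfun t| ≤ 1 / Real.pi) ∧
    hfun Real.pi = 1 / 2 - 1 / Real.pi ∧
    (1 / 2 - 1 / Real.pi : ℝ) ≤ 1 / 2 :=
  ⟨contDiffOn_hfun, fun _ => abs_deriv_hfun_le, hfun_pi,
    sub_le_self _ (one_div_pos.2 pi_pos).le⟩
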